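/- Let f : ℕ^d → ℕ. If there exists an increasing sequence (a_1, a_2, …) in ℕ^d (a_i ≤ a_{i+1} for all i, not eventually constant) such that for all i < j there exists Δ_ij ∈ ℕ^d with f(a_i + Δ_ij) − f(a_i) > f(a_j + Δ_ij) − f(a_j), then f is not obliviously-computable. -/

import Mathlib

/-- A chemical reaction network with species type `σ`, designated input species
`inputs i` for each of the `d` inputs, an output species, and a leader species. -/
structure CRN (d : ℕ) (σ : Type) [Fintype σ] [DecidableEq σ] where
  /-- Each reaction is a pair `(r, p)` of reactant counts and product counts. -/
  reactions : Finset ((σ → ℕ) × (σ → ℕ))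
  inputs : Fin d → σ
  output : σ
  leader : σ
  inputs_inj : Function.Injective inputs
  leader_not_input : ∀ i, inputs i ≠ leader

namespace CRN

variable {d : ℕ} {σ : Type} [Fintype σ] [DecidableEq σ]

/-- One reaction step: some reaction `(r, p)` with `r ≤ c` pointwise fires,
yielding `c - r + p`. -/
def Step (C : CRN d σ) (c c' : σ → ℕ) : Prop :=
  ∃ rp ∈ C.reactions, rp.1 ≤ c ∧ c' = c - rp.1 + rp.2

/-- Reachability by a finite sequence of reaction steps. -/
def Reachable (C : CRN d σ) : (σ → ℕ) → (σ → ℕ) → Prop :=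
  Relation.ReflTransGen C.Step

/-- The initial configuration encoding input `x`: count `x i` of input species
`inputs i`, count 1 of the leader, count 0 of everything else. -/
def init (C : CRN d σ) (x : Fin d → ℕ) : σ → ℕ :=
  fun s => (∑ i, if C.inputs i = s then x i else 0) + (if s = C.leader then 1 else 0)

/-- A configuration is stable if the output count never changes from it. -/
def Stable (C : CRN d σ) (c : σ → ℕ) : Prop :=
  ∀ c', C.Reachable c c' → c' C.output = c C.output

/-- `C` stably computes `f` if from every configuration reachable from an initial
configuration, a stable configuration with correct output count is reachable. -/
def StablyComputes (C : CRN d σ) (f : (Fin d → ℕ) → ℕ) : Prop :=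
  ∀ x c, C.Reachable (C.init x) c →
    ∃ o, C.Reachable c o ∧ C.Stable o ∧ o C.output = f x

/-- A CRN is output-oblivious if the output species is never a reactant. -/
def OutputOblivious (C : CRN d σ) : Prop :=
  ∀ rp ∈ C.reactions, rp.1 C.output = 0

/-- A CRN is output-monotonic if no reaction decreases the output species count. -/
def OutputMonotonic (C : CRN d σ) : Prop :=
  ∀ rp ∈ C.reactions, rp.1 C.output ≤ rp.2 C.output

end CRN

/-- `f` is obliviously-computable if some output-oblivious CRN stably computes it. -/
def ObliviouslyComputable {d : ℕ} (f : (Fin d → ℕ) → ℕ) : Prop :=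
  ∃ (n : ℕ) (C : CRN d (Fin n)), C.OutputOblivious ∧ C.StablyComputes f


/-!
Let `C` be an output-oblivious CRN stably computing `f`, and let `o m` be a configuration reached
from the initial configuration of `a m` with the correct output `f (a m)`. By Dickson's lemma
`o i ≤ o j` for some `i < j`. Adding the inputs `Δ` to `o i`, the CRN can reach an output
`f (a i + Δ)`; replaying the same reactions from `o j + Δ` (which contains the surplus
`o j - o i`) reaches output `f (a i + Δ) + f (a j) - f (a i)`, and since the output is never
consumed, the correct value `f (a j + Δ)` is at least that. This contradicts the hypothesis
on the pair `i < j`.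
-/

namespace CRN

variable {d : ℕ} {σ : Type} [Fintype σ] [DecidableEq σ] (C : CRN d σ)

def inputCount (x : Fin d → ℕ) : σ → ℕ :=
  fun s => ∑ i, if C.inputs i = s then x i else 0

theorem init_add (x Δ : Fin d → ℕ) : C.init (x + Δ) = C.init x + C.inputCount Δ := by
  funext s
  simp only [init, inputCount, Pi.add_apply, ite_add_zero, Finset.sum_add_distrib]
  ring

variable {C}

theorem Step.add_right {c c' : σ → ℕ} (h : C.Step c c') (e : σ → ℕ) :
    C.Step (c + e) (c' + e) := by
  obtain ⟨rp, hrp, hle, rfl⟩ := h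
  refine ⟨rp, hrp, hle.trans le_self_add, ?_⟩
  funext s
  have : rp.1 s ≤ c s := hle s
  simp only [Pi.add_apply, Pi.sub_apply]
  omega

theorem Reachable.add_right {c c' : σ → ℕ} (h : C.Reachable c c') (e : σ → ℕ) :
    C.Reachable (c + e) (c' + e) :=
  h.lift (· + e) fun _ _ hs => hs.add_right e

theorem Reachable.init_add {x : Fin d → ℕ} {c : σ → ℕ} (h : C.Reachable (C.init x) c)
    (Δ : Fin d → ℕ) : C.Reachable (C.init (x + Δ)) (c + C.inputCount Δ) := by
  rw [C.init_add]
  exact h.add_right _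

theorem OutputOblivious.output_le_of_reachable (hob : C.OutputOblivious) {c c' : σ → ℕ}
    (h : C.Reachable c c') : c C.output ≤ c' C.output := by
  induction h with
  | refl => rfl
  | tail _ hstep ih =>
    obtain ⟨rp, hrp, hle, rfl⟩ := hstep
    have := hob rp hrp
    simp only [Pi.add_apply, Pi.sub_apply, this]
    omega

theorem StablyComputes.sub_le_sub_of_le {f : (Fin d → ℕ) → ℕ} (hC : C.StablyComputes f)
    (hob : C.OutputOblivious) {x y : Fin d → ℕ} {c c' : σ → ℕ}
    (hc : C.Reachable (C.init x) c) (hc' : C.Reachable (C.init y) c') (hle : c ≤ c')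
    (hx : c C.output = f x) (hy : c' C.output = f y) (Δ : Fin d → ℕ) :
    (f (x + Δ) : ℤ) - f x ≤ f (y + Δ) - f y := by
  obtain ⟨o, hco, -, ho⟩ := hC _ _ (hc.init_add Δ)
  have hsplit : c' + C.inputCount Δ = c + C.inputCount Δ + (c' - c) := by
    rw [add_right_comm, add_tsub_cancel_of_le hle]
  have hreach : C.Reachable (C.init (y + Δ)) (o + (c' - c)) := by
    refine (hc'.init_add Δ).trans ?_
    rw [hsplit]
    exact hco.add_right _
  obtain ⟨o', ho'r, -, ho'⟩ := hC _ _ hreach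
  have hgain : o C.output + (c' C.output - c C.output) ≤ o' C.output :=
    hob.output_le_of_reachable ho'r
  have := hle C.output
  omega

end CRN

theorem not_obliviouslyComputable_of_bad_sequence_general {d : ℕ} (f : (Fin d → ℕ) → ℕ)
    (a : ℕ → Fin d → ℕ)
    (hbad : ∀ i j, i < j → ∃ Δ : Fin d → ℕ,
      (f (a j + Δ) : ℤ) - (f (a j) : ℤ) < (f (a i + Δ) : ℤ) - (f (a i) : ℤ)) :
    ¬ ObliviouslyComputable f := by
  rintro ⟨n, C, hob, hC⟩
  choose o hreach _ hout using fun m => hC (a m) _ Relation.ReflTransGen.refl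
  obtain ⟨i, j, hij, hle⟩ :=
    (Set.isPWO_of_wellQuasiOrderedLE Set.univ).exists_lt (f := o) fun _ => Set.mem_univ _
  obtain ⟨Δ, hΔ⟩ := hbad i j hij
  exact (hC.sub_le_sub_of_le hob (hreach i) (hreach j) hle (hout i) (hout j) Δ).not_gt hΔ

/-- **Dickson contradiction lemma.** If there is an increasing (pointwise
nondecreasing, not eventually constant) sequence `a_1, a_2, …` in `ℕ^d` such that
for all `i < j` there is `Δ ∈ ℕ^d` with
`f(a_i + Δ) − f(a_i) > f(a_j + Δ) − f(a_j)`, then `f` is not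
obliviously-computable. -/
theorem not_obliviouslyComputable_of_bad_sequence {d : ℕ} (f : (Fin d → ℕ) → ℕ)
    (a : ℕ → Fin d → ℕ)
    (hmono : ∀ i, a i ≤ a (i + 1))
    (hnec : ¬ ∃ N, ∀ m, N ≤ m → a m = a N)
    (hbad : ∀ i j, i < j → ∃ Δ : Fin d → ℕ,
      (f (a j + Δ) : ℤ) - (f (a j) : ℤ) < (f (a i + Δ) : ℤ) - (f (a i) : ℤ)) :
    ¬ ObliviouslyComputable f :=
  not_obliviouslyComputable_of_bad_sequence_general f a hbad
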